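/- arXiv:2209.04125 — 3 statements merged into one kernel-verified Lean document; each statement's English description precedes it below -/
import Mathlib

section
/- Let X and Y be directed spaces and let (x₁, y₁), (x₂, y₂) ∈ X × Y. Then (x₁, y₁) ≪ (x₂, y₂) in X ⊗ Y if and only if x₁ ≪ x₂ in X and y₁ ≪ y₂ in Y. -/
open Set

section Defs

variable {X : Type*} [TopologicalSpace X]

/-- Specialization order: `x ⊑ y` iff `x ∈ closure {y}`. -/
def SOrd (x y : X) : Prop := x ∈ closure ({y} : Set X)

/-- `D` is a directed subset (w.r.t. the specialization order). -/
def IsDirSub (D : Set X) : Prop :=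
  D.Nonempty ∧ ∀ a ∈ D, ∀ b ∈ D, ∃ c ∈ D, SOrd a c ∧ SOrd b c

/-- `D` converges to `x`: every open neighbourhood of `x` meets `D`. -/
def ConvTo (D : Set X) (x : X) : Prop :=
  ∀ U : Set X, IsOpen U → x ∈ U → (D ∩ U).Nonempty

/-- `U` is directed-open. -/
def DirOpen (U : Set X) : Prop :=
  ∀ (D : Set X) (x : X), IsDirSub D → ConvTo D x → x ∈ U → (D ∩ U).Nonempty

/-- `x ≪ y` : `x` d-approximates `y`. -/
def WayBelow (x y : X) : Prop :=
  ∀ D : Set X, IsDirSub D → ConvTo D y → ∃ d ∈ D, SOrd x d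

/-- `↓x` w.r.t. the specialization order. -/
def dnSet (x : X) : Set X := {z | SOrd z x}

/-- `↑x` w.r.t. the specialization order. -/
def upSet (x : X) : Set X := {z | SOrd x z}

/-- `⇓y = {x | x ≪ y}`. -/
def wbSet (y : X) : Set X := {x | WayBelow x y}

/-- `x` is the least upper bound of `D` w.r.t. the specialization order. -/
def IsSupOf (x : X) (D : Set X) : Prop :=
  (∀ d ∈ D, SOrd d x) ∧ ∀ y : X, (∀ d ∈ D, SOrd d y) → SOrd x y

/-- A topological ideal: a directed lower set having a supremum and converging to it. -/
def IsTopIdeal (A : Set X) : Prop :=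
  IsDirSub A ∧ (∀ a ∈ A, ∀ z : X, SOrd z a → z ∈ A) ∧
    ∃ s : X, IsSupOf s A ∧ ConvTo A s

end Defs

/-- The set of d-compact elements of `X`. -/
def KSet (X : Type*) [TopologicalSpace X] : Set X := {x | WayBelow x x}

/-- A directed space: a T0 space in which every directed-open set is open. -/
def IsDirectedSpace (X : Type*) [TopologicalSpace X] : Prop :=
  T0Space X ∧ ∀ U : Set X, DirOpen U → IsOpen U

/-- An algebraic space. -/
def IsAlgebraicSpace (X : Type*) [TopologicalSpace X] : Prop :=
  IsDirectedSpace X ∧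
    ∀ x : X, IsDirSub (dnSet x ∩ KSet X) ∧ ConvTo (dnSet x ∩ KSet X) x

/-- A continuous space. -/
def IsContinuousSpace (X : Type*) [TopologicalSpace X] : Prop :=
  IsDirectedSpace X ∧ ∀ x : X, ∃ D ⊆ wbSet x, IsDirSub D ∧ ConvTo D x

/-- A b-space. -/
def IsBSpace (X : Type*) [TopologicalSpace X] : Prop :=
  ∀ U : Set X, IsOpen U → ∀ x ∈ U,
    ∃ y : X, x ∈ interior (upSet y) ∧ interior (upSet y) = upSet y ∧ upSet y ⊆ U

/-- `B` is a basis of the directed space `X`. -/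
def IsBasisOf (X : Type*) [TopologicalSpace X] (B : Set X) : Prop :=
  ∀ x : X, IsDirSub (wbSet x ∩ B) ∧ ConvTo (wbSet x ∩ B) x

/-- The set of topological ideals of `X`. -/
def TopIdeal (X : Type*) [TopologicalSpace X] : Type _ := {A : Set X // IsTopIdeal A}

/-- Membership in the topology `Ω(I_T(X))`. -/
def OmegaOpen {X : Type*} [TopologicalSpace X] (𝒰 : Set (TopIdeal X)) : Prop :=
  ∀ A : TopIdeal X, A ∈ 𝒰 ↔
    ∃ B : TopIdeal X, (∃ x : X, B.1 = dnSet x) ∧ B ∈ 𝒰 ∧ B.1 ⊆ A.1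

theorem sOrd_refl {X : Type*} [TopologicalSpace X] (x : X) : SOrd x x :=
  subset_closure rfl

theorem sOrd_trans {X : Type*} [TopologicalSpace X] {x y z : X}
    (h1 : SOrd x y) (h2 : SOrd y z) : SOrd x z :=
  (closure_minimal (Set.singleton_subset_iff.mpr h2) isClosed_closure) h1

theorem principal_isTopIdeal {X : Type*} [TopologicalSpace X] (x : X) :
    IsTopIdeal (dnSet x) := by
  refine ⟨⟨⟨x, sOrd_refl x⟩, ?_⟩, ?_, x, ⟨?_, ?_⟩, ?_⟩
  · intro a ha b hb
    exact ⟨x, sOrd_refl x, ha, hb⟩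
  · intro a ha z hz
    exact sOrd_trans hz ha
  · intro d hd; exact hd
  · intro y hy; exact hy x (sOrd_refl x)
  · intro U _ hxU
    exact ⟨x, sOrd_refl x, hxU⟩

/-- The topology `Ω(I_T(X))` on the set of topological ideals. -/
def OmegaTop (X : Type*) [TopologicalSpace X] : TopologicalSpace (TopIdeal X) where
  IsOpen := OmegaOpen
  isOpen_univ := by
    intro A
    constructor
    · intro _
      obtain ⟨⟨a, ha⟩, -⟩ := A.2.1
      refine ⟨⟨dnSet a, principal_isTopIdeal a⟩, ⟨a, rfl⟩, trivial, ?_⟩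
      intro z hz
      exact A.2.2.1 a ha z hz
    · intro _
      trivial
  isOpen_inter := by
    intro 𝒰 𝒱 h𝒰 h𝒱 A
    constructor
    · rintro ⟨hAU, hAV⟩
      obtain ⟨B1, ⟨x, hx⟩, hB1U, hB1A⟩ := (h𝒰 A).mp hAU
      obtain ⟨B2, ⟨y, hy⟩, hB2V, hB2A⟩ := (h𝒱 A).mp hAV
      have hxA : x ∈ A.1 := hB1A (by rw [hx]; exact sOrd_refl x)
      have hyA : y ∈ A.1 := hB2A (by rw [hy]; exact sOrd_refl y)
      obtain ⟨c, hcA, hxc, hyc⟩ := A.2.1.2 x hxA y hyA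
      have hsubU : B1.1 ⊆ dnSet c := by
        rw [hx]; intro z hz; exact sOrd_trans hz hxc
      have hsubV : B2.1 ⊆ dnSet c := by
        rw [hy]; intro z hz; exact sOrd_trans hz hyc
      have hcU : (⟨dnSet c, principal_isTopIdeal c⟩ : TopIdeal X) ∈ 𝒰 :=
        (h𝒰 _).mpr ⟨B1, ⟨x, hx⟩, hB1U, hsubU⟩
      have hcV : (⟨dnSet c, principal_isTopIdeal c⟩ : TopIdeal X) ∈ 𝒱 :=
        (h𝒱 _).mpr ⟨B2, ⟨y, hy⟩, hB2V, hsubV⟩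
      exact ⟨⟨dnSet c, principal_isTopIdeal c⟩, ⟨c, rfl⟩, ⟨hcU, hcV⟩,
        fun z hz => A.2.2.1 c hcA z hz⟩
    · rintro ⟨B, hBp, ⟨hBU, hBV⟩, hBA⟩
      exact ⟨(h𝒰 A).mpr ⟨B, hBp, hBU, hBA⟩, (h𝒱 A).mpr ⟨B, hBp, hBV, hBA⟩⟩
  isOpen_sUnion := by
    intro S hS A
    constructor
    · rintro ⟨𝒰, h𝒰S, hA𝒰⟩
      obtain ⟨B, hBp, hB𝒰, hBA⟩ := (hS 𝒰 h𝒰S A).mp hA𝒰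
      exact ⟨B, hBp, ⟨𝒰, h𝒰S, hB𝒰⟩, hBA⟩
    · rintro ⟨B, hBp, ⟨𝒰, h𝒰S, hB𝒰⟩, hBA⟩
      exact ⟨𝒰, h𝒰S, (hS 𝒰 h𝒰S A).mpr ⟨B, hBp, hB𝒰, hBA⟩⟩

instance (X : Type*) [TopologicalSpace X] : TopologicalSpace (TopIdeal X) :=
  OmegaTop X

theorem open_dirOpen {X : Type*} [TopologicalSpace X] {U : Set X} (hU : IsOpen U) :
    DirOpen U := fun _ _ _ hconv hx => hconv U hU hx

theorem sOrd_prod {X Y : Type*} [TopologicalSpace X] [TopologicalSpace Y]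
    {p q : X × Y} : SOrd p q ↔ SOrd p.1 q.1 ∧ SOrd p.2 q.2 := by
  have : ({q} : Set (X × Y)) = {q.1} ×ˢ {q.2} := by simp
  rw [SOrd, this, closure_prod_eq]
  exact Set.mem_prod

/-- way-below in `X ⊗ Y` is componentwise way-below. -/
theorem tensor_wayBelow {X Y : Type*} [TopologicalSpace X] [TopologicalSpace Y]
    (hX : IsDirectedSpace X) (hY : IsDirectedSpace Y)
    (x₁ x₂ : X) (y₁ y₂ : Y) :
    (∀ D : Set (X × Y),
        (D.Nonempty ∧ ∀ p ∈ D, ∀ q ∈ D, ∃ r ∈ D,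
          (SOrd p.1 r.1 ∧ SOrd p.2 r.2) ∧ (SOrd q.1 r.1 ∧ SOrd q.2 r.2)) →
        (∀ U : Set (X × Y), DirOpen U → (x₂, y₂) ∈ U → (D ∩ U).Nonempty) →
        ∃ d ∈ D, SOrd x₁ d.1 ∧ SOrd y₁ d.2) ↔
      (WayBelow x₁ x₂ ∧ WayBelow y₁ y₂) := by
  constructor
  · intro h
    constructor
    · intro DX hDX hconvX
      have hdir : (DX ×ˢ ({y₂} : Set Y)).Nonempty ∧ ∀ p ∈ DX ×ˢ ({y₂} : Set Y),
          ∀ q ∈ DX ×ˢ ({y₂} : Set Y), ∃ r ∈ DX ×ˢ ({y₂} : Set Y),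
          (SOrd p.1 r.1 ∧ SOrd p.2 r.2) ∧ (SOrd q.1 r.1 ∧ SOrd q.2 r.2) := by
        refine ⟨⟨(hDX.1.choose, y₂), hDX.1.choose_spec, rfl⟩, ?_⟩
        rintro ⟨a, b⟩ ⟨haD, hb⟩ ⟨a', b'⟩ ⟨haD', hb'⟩
        obtain ⟨c, hcD, hac, hac'⟩ := hDX.2 a haD a' haD'
        have e : b = y₂ := hb
        have e' : b' = y₂ := hb'
        refine ⟨(c, y₂), ⟨hcD, rfl⟩, ⟨hac, ?_⟩, ⟨hac', ?_⟩⟩ <;>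
          simp only [e, e'] <;> exact sOrd_refl _
      have hconv : ∀ U : Set (X × Y), DirOpen U → (x₂, y₂) ∈ U →
          ((DX ×ˢ ({y₂} : Set Y)) ∩ U).Nonempty := by
        intro U hU hxU
        refine hU (DX ×ˢ {y₂}) (x₂, y₂) ⟨hdir.1, ?_⟩ ?_ hxU
        · intro p hp q hq
          obtain ⟨r, hr, h1, h2⟩ := hdir.2 p hp q hq
          exact ⟨r, hr, sOrd_prod.mpr h1, sOrd_prod.mpr h2⟩
        · intro V hV hxy
          obtain ⟨V1, V2, hV1, hV2, hx1, hy2, hsub⟩ := isOpen_prod_iff.mp hV x₂ y₂ hxy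
          obtain ⟨d, hdD, hdV1⟩ := hconvX V1 hV1 hx1
          exact ⟨(d, y₂), ⟨hdD, rfl⟩, hsub ⟨hdV1, hy2⟩⟩
      obtain ⟨d, hdD, hd1, -⟩ := h (DX ×ˢ {y₂}) hdir hconv
      exact ⟨d.1, hdD.1, hd1⟩
    · intro DY hDY hconvY
      have hdir : (({x₂} : Set X) ×ˢ DY).Nonempty ∧ ∀ p ∈ ({x₂} : Set X) ×ˢ DY,
          ∀ q ∈ ({x₂} : Set X) ×ˢ DY, ∃ r ∈ ({x₂} : Set X) ×ˢ DY,
          (SOrd p.1 r.1 ∧ SOrd p.2 r.2) ∧ (SOrd q.1 r.1 ∧ SOrd q.2 r.2) := by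
        refine ⟨⟨(x₂, hDY.1.choose), rfl, hDY.1.choose_spec⟩, ?_⟩
        rintro ⟨a, b⟩ ⟨ha, hbD⟩ ⟨a', b'⟩ ⟨ha', hbD'⟩
        obtain ⟨c, hcD, hbc, hbc'⟩ := hDY.2 b hbD b' hbD'
        have e : a = x₂ := ha
        have e' : a' = x₂ := ha'
        refine ⟨(x₂, c), ⟨rfl, hcD⟩, ⟨?_, hbc⟩, ⟨?_, hbc'⟩⟩ <;>
          simp only [e, e'] <;> exact sOrd_refl _
      have hconv : ∀ U : Set (X × Y), DirOpen U → (x₂, y₂) ∈ U →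
          ((({x₂} : Set X) ×ˢ DY) ∩ U).Nonempty := by
        intro U hU hxU
        refine hU ({x₂} ×ˢ DY) (x₂, y₂) ⟨hdir.1, ?_⟩ ?_ hxU
        · intro p hp q hq
          obtain ⟨r, hr, h1, h2⟩ := hdir.2 p hp q hq
          exact ⟨r, hr, sOrd_prod.mpr h1, sOrd_prod.mpr h2⟩
        · intro V hV hxy
          obtain ⟨V1, V2, hV1, hV2, hx1, hy2, hsub⟩ := isOpen_prod_iff.mp hV x₂ y₂ hxy
          obtain ⟨d, hdD, hdV2⟩ := hconvY V2 hV2 hy2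
          exact ⟨(x₂, d), ⟨rfl, hdD⟩, hsub ⟨hx1, hdV2⟩⟩
      obtain ⟨d, hdD, -, hd2⟩ := h ({x₂} ×ˢ DY) hdir hconv
      exact ⟨d.2, hdD.2, hd2⟩
  · rintro ⟨hx, hy⟩ D ⟨hDne, hDdir⟩ hconv
    have hD1 : IsDirSub (Prod.fst '' D) := by
      refine ⟨hDne.image _, ?_⟩
      rintro a ⟨p, hpD, rfl⟩ b ⟨q, hqD, rfl⟩
      obtain ⟨r, hrD, ⟨h1, -⟩, ⟨h2, -⟩⟩ := hDdir p hpD q hqD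
      exact ⟨r.1, ⟨r, hrD, rfl⟩, h1, h2⟩
    have hD2 : IsDirSub (Prod.snd '' D) := by
      refine ⟨hDne.image _, ?_⟩
      rintro a ⟨p, hpD, rfl⟩ b ⟨q, hqD, rfl⟩
      obtain ⟨r, hrD, ⟨-, h1⟩, ⟨-, h2⟩⟩ := hDdir p hpD q hqD
      exact ⟨r.2, ⟨r, hrD, rfl⟩, h1, h2⟩
    have hc1 : ConvTo (Prod.fst '' D) x₂ := by
      intro U hU hxU
      obtain ⟨d, hdD, hdU⟩ := hconv (U ×ˢ (Set.univ : Set Y))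
        (open_dirOpen (hU.prod isOpen_univ)) ⟨hxU, trivial⟩
      exact ⟨d.1, ⟨d, hdD, rfl⟩, hdU.1⟩
    have hc2 : ConvTo (Prod.snd '' D) y₂ := by
      intro U hU hyU
      obtain ⟨d, hdD, hdU⟩ := hconv ((Set.univ : Set X) ×ˢ U)
        (open_dirOpen (isOpen_univ.prod hU)) ⟨trivial, hyU⟩
      exact ⟨d.2, ⟨d, hdD, rfl⟩, hdU.2⟩
    obtain ⟨a, ⟨p, hpD, rfl⟩, hxa⟩ := hx _ hD1 hc1
    obtain ⟨b, ⟨q, hqD, rfl⟩, hyb⟩ := hy _ hD2 hc2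
    obtain ⟨r, hrD, ⟨h1, -⟩, ⟨-, h2⟩⟩ := hDdir p hpD q hqD
    exact ⟨r, hrD, sOrd_trans hxa h1, sOrd_trans hyb h2⟩
end

section
/- Let X be a T0 space. Then the map ⋁ : I_T(X) → X sending each topological ideal A to its supremum sup A is a well-defined, surjective, continuous map from (I_T(X), Ω(I_T(X))) to X. -/
open Set

lemma sOrd_antisymm {X : Type*} [TopologicalSpace X] [T0Space X] {x y : X}
    (h1 : SOrd x y) (h2 : SOrd y x) : x = y :=
  ((specializes_iff_mem_closure.mpr h2).antisymm
    (specializes_iff_mem_closure.mpr h1)).eq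

lemma sup_unique {X : Type*} [TopologicalSpace X] [T0Space X] {A : Set X} {s t : X}
    (hs : IsSupOf s A) (ht : IsSupOf t A) : s = t :=
  sOrd_antisymm (hs.2 t ht.1) (ht.2 s hs.1)

/-- the supremum map `⋁ : I_T(X) → X` is a well-defined (unique),
surjective, continuous map. -/
theorem sup_map_continuous_surjective (X : Type*) [TopologicalSpace X] [T0Space X] :
    ∃ sup : TopIdeal X → X,
      (∀ A : TopIdeal X, IsSupOf (sup A) A.1) ∧
      Function.Surjective sup ∧ Continuous sup ∧
      ∀ g : TopIdeal X → X, (∀ A : TopIdeal X, IsSupOf (g A) A.1) → g = sup := by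
  choose sup hsup hconv using fun A : TopIdeal X => A.2.2.2
  refine ⟨sup, hsup, ?_, ?_, ?_⟩
  · -- surjective
    intro x
    refine ⟨⟨dnSet x, principal_isTopIdeal x⟩, ?_⟩
    exact sup_unique (hsup _) ⟨fun d hd => hd, fun y hy => hy x (sOrd_refl x)⟩
  · -- continuous
    refine ⟨fun U hU => ?_⟩
    intro A
    constructor
    · intro hA
      obtain ⟨a, haA, haU⟩ := hconv A U hU hA
      refine ⟨⟨dnSet a, principal_isTopIdeal a⟩, ⟨a, rfl⟩, ?_, fun z hz => A.2.2.1 a haA z hz⟩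
      have : sup ⟨dnSet a, principal_isTopIdeal a⟩ = a :=
        sup_unique (hsup _) ⟨fun d hd => hd, fun y hy => hy a (sOrd_refl a)⟩
      show sup _ ∈ U
      rw [this]; exact haU
    · rintro ⟨B, ⟨x, hx⟩, hBU, hBA⟩
      have hxB : x ∈ B.1 := by rw [hx]; exact sOrd_refl x
      have hxA : x ∈ A.1 := hBA hxB
      have hxs : SOrd x (sup A) := (hsup A).1 x hxA
      have hsupB : sup B = x :=
        sup_unique (hsup B) (by rw [hx]
                                exact ⟨fun d hd => hd, fun y hy => hy x (sOrd_refl x)⟩)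
      have hxU : x ∈ U := hsupB ▸ hBU
      -- x ∈ closure {sup A} and x ∈ U open, so sup A ∈ U
      obtain ⟨z, hzU, hz⟩ := mem_closure_iff.mp hxs U hU hxU
      rw [Set.mem_singleton_iff] at hz
      show sup A ∈ U
      exact hz ▸ hzU
  · -- uniqueness
    intro g hg
    funext A
    exact sup_unique (hg A) (hsup A)
end

section
/- A T0 topological space X is a continuous space if and only if X is a continuous retract of some algebraic space, i.e., there exist an algebraic space Y and continuous maps s : X → Y and r : Y → X with r ∘ s = id_X. -/
open Set

/-!
An algebraic space is continuous, since a d-compact `k ⊑ x` satisfies `k ≪ x`, and continuity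
passes to retracts: `r` maps `⇓(s x)` into `⇓x`. Conversely, for a continuous space `X` the
topological ideals with the topology `Ω` form an algebraic space whose d-compact elements are the
principal ideals. Taking suprema is a continuous retraction onto `X`, with section `x ↦ ⇓x`; the
section is continuous because interpolation makes every `{x | z ≪ x}` open.
-/

variable {X Y : Type*} [TopologicalSpace X] [TopologicalSpace Y]

theorem sOrd_iff_specializes {x y : X} : SOrd x y ↔ y ⤳ x :=
  specializes_iff_mem_closure.symm

namespace SOrd

theorem mem_of_isOpen {U : Set X} {x y : X} (h : SOrd x y) (hU : IsOpen U) (hx : x ∈ U) :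
    y ∈ U :=
  (sOrd_iff_specializes.1 h).mem_open hU hx

theorem antisymm [T0Space X] {x y : X} (h₁ : SOrd x y) (h₂ : SOrd y x) : x = y :=
  ((sOrd_iff_specializes.1 h₂).antisymm (sOrd_iff_specializes.1 h₁)).eq

theorem map {f : X → Y} (hf : Continuous f) {a b : X} (h : SOrd a b) : SOrd (f a) (f b) :=
  sOrd_iff_specializes.2 ((sOrd_iff_specializes.1 h).map hf)

end SOrd

theorem IsSupOf.unique [T0Space X] {a b : X} {S : Set X} (ha : IsSupOf a S) (hb : IsSupOf b S) :
    a = b :=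
  (ha.2 b hb.1).antisymm (hb.2 a ha.1)

theorem isSupOf_dnSet (x : X) : IsSupOf x (dnSet x) :=
  ⟨fun _ hd => hd, fun _ hy => hy x (sOrd_refl x)⟩

theorem isDirSub_singleton (x : X) : IsDirSub ({x} : Set X) :=
  ⟨singleton_nonempty x, fun _ ha _ hb => ⟨x, rfl, ha ▸ sOrd_refl x, hb ▸ sOrd_refl x⟩⟩

theorem IsDirSub.image_of_sOrd_mono {D : Set X} {f : X → Y} (hD : IsDirSub D)
    (hf : ∀ a b, SOrd a b → SOrd (f a) (f b)) : IsDirSub (f '' D) := by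
  refine ⟨hD.1.image f, ?_⟩
  rintro _ ⟨a, ha, rfl⟩ _ ⟨b, hb, rfl⟩
  obtain ⟨c, hc, hac, hbc⟩ := hD.2 a ha b hb
  exact ⟨f c, mem_image_of_mem f hc, hf a c hac, hf b c hbc⟩

theorem IsDirSub.image {D : Set X} {f : X → Y} (hD : IsDirSub D) (hf : Continuous f) :
    IsDirSub (f '' D) :=
  hD.image_of_sOrd_mono fun _ _ => SOrd.map hf

namespace ConvTo

theorem mono {D E : Set X} {x : X} (h : ConvTo D x) (hDE : D ⊆ E) : ConvTo E x :=
  fun U hU hx => (h U hU hx).mono (inter_subset_inter_left U hDE)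

theorem of_sOrd {D : Set X} {x y : X} (h : ConvTo D y) (hxy : SOrd x y) : ConvTo D x :=
  fun U hU hx => h U hU (hxy.mem_of_isOpen hU hx)

theorem image {D : Set X} {x : X} {f : X → Y} (h : ConvTo D x) (hf : Continuous f) :
    ConvTo (f '' D) (f x) := by
  intro V hV hfx
  obtain ⟨d, hd, hdV⟩ := h (f ⁻¹' V) (hV.preimage hf) hfx
  exact ⟨f d, mem_image_of_mem f hd, hdV⟩

theorem sOrd_of_forall_sOrd {D : Set X} {x y : X} (h : ConvTo D x)
    (hy : ∀ d ∈ D, SOrd d y) : SOrd x y :=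
  sOrd_iff_specializes.2 <| specializes_iff_forall_open.2 fun U hU hx =>
    let ⟨d, hd, hdU⟩ := h U hU hx
    (hy d hd).mem_of_isOpen hU hdU

end ConvTo

theorem convTo_singleton (x : X) : ConvTo ({x} : Set X) x :=
  fun _ _ hx => ⟨x, rfl, hx⟩

theorem DirOpen.preimage {U : Set X} (hU : DirOpen U) {f : Y → X} (hf : Continuous f) :
    DirOpen (f ⁻¹' U) := by
  intro D y hD hconv hy
  obtain ⟨_, ⟨d, hd, rfl⟩, hdU⟩ := hU _ _ (hD.image hf) (hconv.image hf) hy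
  exact ⟨d, hd, hdU⟩

theorem WayBelow.sOrd {x y : X} (h : WayBelow x y) : SOrd x y := by
  obtain ⟨d, rfl, hxd⟩ := h {y} (isDirSub_singleton y) (convTo_singleton y)
  exact hxd

theorem SOrd.trans_wayBelow {a b c : X} (hab : SOrd a b) (h : WayBelow b c) : WayBelow a c :=
  fun D hD hc => let ⟨d, hd, hbd⟩ := h D hD hc; ⟨d, hd, sOrd_trans hab hbd⟩

theorem WayBelow.trans_sOrd {a b c : X} (h : WayBelow a b) (hbc : SOrd b c) : WayBelow a c :=
  fun D hD hc => h D hD (hc.of_sOrd hbc)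

theorem IsDirSub.exists_sOrd_of_wayBelow {D : Set X} {x y₁ y₂ : X} (hD : IsDirSub D)
    (hconv : ConvTo D x) (h₁ : WayBelow y₁ x) (h₂ : WayBelow y₂ x) :
    ∃ d ∈ D, SOrd y₁ d ∧ SOrd y₂ d := by
  obtain ⟨d₁, hd₁, hy₁⟩ := h₁ D hD hconv
  obtain ⟨d₂, hd₂, hy₂⟩ := h₂ D hD hconv
  obtain ⟨d, hd, hd₁d, hd₂d⟩ := hD.2 d₁ hd₁ d₂ hd₂
  exact ⟨d, hd, sOrd_trans hy₁ hd₁d, sOrd_trans hy₂ hd₂d⟩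

theorem IsAlgebraicSpace.isContinuousSpace (hX : IsAlgebraicSpace X) : IsContinuousSpace X :=
  ⟨hX.1, fun x => ⟨dnSet x ∩ KSet X, fun _ hk => WayBelow.trans_sOrd hk.2 hk.1, hX.2 x⟩⟩

section Retract

variable {s : X → Y} {r : Y → X}

theorem IsDirectedSpace.of_retract (hY : IsDirectedSpace Y) (hs : Continuous s)
    (hr : Continuous r) (hrs : Function.LeftInverse r s) : IsDirectedSpace X := by
  have := hY.1
  refine ⟨t0Space_of_injective_of_continuous hrs.injective hs, fun U hU => ?_⟩
  have hsr : s ⁻¹' (r ⁻¹' U) = U := by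
    rw [← preimage_comp, hrs.comp_eq_id, preimage_id]
  exact hsr ▸ (hY.2 _ (hU.preimage hr)).preimage hs

theorem WayBelow.of_retract (hs : Continuous s) (hr : Continuous r)
    (hrs : Function.LeftInverse r s) {k : Y} {x : X} (h : WayBelow k (s x)) :
    WayBelow (r k) x := by
  intro D hD hconv
  obtain ⟨_, ⟨d, hd, rfl⟩, hkd⟩ := h _ (hD.image hs) (hconv.image hs)
  exact ⟨d, hd, hrs d ▸ hkd.map hr⟩

theorem IsContinuousSpace.of_retract (hY : IsContinuousSpace Y) (hs : Continuous s)
    (hr : Continuous r) (hrs : Function.LeftInverse r s) : IsContinuousSpace X := by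
  refine ⟨hY.1.of_retract hs hr hrs, fun x => ?_⟩
  obtain ⟨D, hDwb, hD, hconv⟩ := hY.2 (s x)
  refine ⟨r '' D, image_subset_iff.2 fun k hk => WayBelow.of_retract hs hr hrs (hDwb hk),
    hD.image hr, ?_⟩
  simpa only [hrs x] using hconv.image hr

end Retract

namespace TopIdeal

theorem dnSet_subset_iff {A : TopIdeal X} {x : X} : dnSet x ⊆ A.1 ↔ x ∈ A.1 :=
  ⟨fun h => h (sOrd_refl x), fun hx z hz => A.2.2.1 x hx z hz⟩

def principal (x : X) : TopIdeal X := ⟨dnSet x, principal_isTopIdeal x⟩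

theorem isOpen_iff {𝒰 : Set (TopIdeal X)} :
    IsOpen 𝒰 ↔ ∀ A : TopIdeal X, A ∈ 𝒰 ↔ ∃ x ∈ A.1, principal x ∈ 𝒰 := by
  refine forall_congr' fun A => iff_congr Iff.rfl ⟨?_, ?_⟩
  · rintro ⟨B, ⟨x, hx⟩, hB, hBA⟩
    obtain rfl : B = principal x := Subtype.ext hx
    exact ⟨x, dnSet_subset_iff.1 hBA, hB⟩
  · rintro ⟨x, hx, hx𝒰⟩
    exact ⟨principal x, ⟨x, rfl⟩, hx𝒰, dnSet_subset_iff.2 hx⟩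

theorem isOpen_setOf_mem (a : X) : IsOpen {A : TopIdeal X | a ∈ A.1} :=
  isOpen_iff.2 fun A =>
    ⟨fun ha => ⟨a, ha, sOrd_refl a⟩, fun ⟨x, hx, hax⟩ => A.2.2.1 x hx a hax⟩

theorem sOrd_iff_subset {A B : TopIdeal X} : SOrd A B ↔ A.1 ⊆ B.1 := by
  rw [sOrd_iff_specializes, specializes_iff_forall_open]
  refine ⟨fun h a ha => h _ (isOpen_setOf_mem a) ha, fun hAB 𝒰 h𝒰 hA => ?_⟩
  obtain ⟨x, hx, hx𝒰⟩ := (isOpen_iff.1 h𝒰 A).1 hA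
  exact (isOpen_iff.1 h𝒰 B).2 ⟨x, hAB hx, hx𝒰⟩

theorem principal_sOrd_iff {x : X} {A : TopIdeal X} : SOrd (principal x) A ↔ x ∈ A.1 :=
  sOrd_iff_subset.trans dnSet_subset_iff

instance : T0Space (TopIdeal X) :=
  t0Space_iff_inseparable _ |>.2 fun _ _ h => Subtype.ext <| subset_antisymm
    (sOrd_iff_subset.1 (sOrd_iff_specializes.2 h.specializes'))
    (sOrd_iff_subset.1 (sOrd_iff_specializes.2 h.specializes))

theorem isDirSub_image_principal (A : TopIdeal X) : IsDirSub (principal '' A.1) :=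
  A.2.1.image_of_sOrd_mono fun _ _ hab => principal_sOrd_iff.2 hab

theorem convTo_image_principal (A : TopIdeal X) : ConvTo (principal '' A.1) A := by
  intro 𝒰 h𝒰 hA
  obtain ⟨x, hx, hx𝒰⟩ := (isOpen_iff.1 h𝒰 A).1 hA
  exact ⟨principal x, mem_image_of_mem _ hx, hx𝒰⟩

theorem isDirectedSpace : IsDirectedSpace (TopIdeal X) := by
  refine ⟨inferInstance, fun 𝒱 h𝒱 => isOpen_iff.2 fun A => ⟨fun hA => ?_, ?_⟩⟩
  · obtain ⟨_, ⟨x, hx, rfl⟩, hx𝒱⟩ :=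
      h𝒱 _ A (isDirSub_image_principal A) (convTo_image_principal A) hA
    exact ⟨x, hx, hx𝒱⟩
  · rintro ⟨x, hx, hx𝒱⟩
    obtain ⟨_, rfl, hA⟩ := h𝒱 {A} (principal x) (isDirSub_singleton A)
      ((convTo_singleton A).of_sOrd (principal_sOrd_iff.2 hx)) hx𝒱
    exact hA

theorem principal_mem_KSet (x : X) : principal x ∈ KSet (TopIdeal X) := by
  intro D hD hconv
  obtain ⟨B, hBD, hxB⟩ := hconv _ (isOpen_setOf_mem x) (sOrd_refl x)
  exact ⟨B, hBD, principal_sOrd_iff.2 hxB⟩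

theorem exists_eq_principal_of_mem_KSet {B : TopIdeal X} (hB : B ∈ KSet (TopIdeal X)) :
    ∃ a ∈ B.1, B = principal a := by
  obtain ⟨_, ⟨a, ha, rfl⟩, hBa⟩ :=
    hB _ (isDirSub_image_principal B) (convTo_image_principal B)
  exact ⟨a, ha, Subtype.ext (subset_antisymm (sOrd_iff_subset.1 hBa) (dnSet_subset_iff.2 ha))⟩

theorem dnSet_inter_KSet (A : TopIdeal X) : dnSet A ∩ KSet (TopIdeal X) = principal '' A.1 := by
  refine Subset.antisymm ?_ ?_
  · rintro B ⟨hBA, hB⟩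
    obtain ⟨a, ha, rfl⟩ := exists_eq_principal_of_mem_KSet hB
    exact ⟨a, sOrd_iff_subset.1 hBA ha, rfl⟩
  · rintro _ ⟨a, ha, rfl⟩
    exact ⟨principal_sOrd_iff.2 ha, principal_mem_KSet a⟩

theorem isAlgebraicSpace : IsAlgebraicSpace (TopIdeal X) :=
  ⟨isDirectedSpace, fun A => dnSet_inter_KSet A ▸
    ⟨isDirSub_image_principal A, convTo_image_principal A⟩⟩

noncomputable def sup (A : TopIdeal X) : X := A.2.2.2.choose

theorem isSupOf_sup (A : TopIdeal X) : IsSupOf (sup A) A.1 := A.2.2.2.choose_spec.1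

theorem convTo_sup (A : TopIdeal X) : ConvTo A.1 (sup A) := A.2.2.2.choose_spec.2

theorem sup_eq_of_isSupOf [T0Space X] {A : TopIdeal X} {x : X} (h : IsSupOf x A.1) : sup A = x :=
  (isSupOf_sup A).unique h

theorem sup_principal [T0Space X] (x : X) : sup (principal x) = x :=
  sup_eq_of_isSupOf (A := principal x) (isSupOf_dnSet x)

theorem continuous_sup [T0Space X] : Continuous (sup : TopIdeal X → X) := by
  refine continuous_def.2 fun U hU => isOpen_iff.2 fun A => ⟨fun hA => ?_, ?_⟩
  · obtain ⟨x, hx, hxU⟩ := convTo_sup A U hU hA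
    exact ⟨x, hx, by rwa [mem_preimage, sup_principal]⟩
  · rintro ⟨x, hx, hxU⟩
    rw [mem_preimage, sup_principal] at hxU
    exact ((isSupOf_sup A).1 x hx).mem_of_isOpen hU hxU

end TopIdeal

namespace IsContinuousSpace

theorem isDirSub_wbSet (hX : IsContinuousSpace X) (x : X) : IsDirSub (wbSet x) := by
  obtain ⟨D, hDwb, hD, hconv⟩ := hX.2 x
  refine ⟨hD.1.mono hDwb, fun y₁ h₁ y₂ h₂ => ?_⟩
  obtain ⟨d, hd, hy₁, hy₂⟩ := hD.exists_sOrd_of_wayBelow hconv h₁ h₂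
  exact ⟨d, hDwb hd, hy₁, hy₂⟩

theorem convTo_wbSet (hX : IsContinuousSpace X) (x : X) : ConvTo (wbSet x) x :=
  let ⟨_, hDwb, _, hconv⟩ := hX.2 x
  hconv.mono hDwb

theorem exists_wayBelow_wayBelow (hX : IsContinuousSpace X) {y x : X} (h : WayBelow y x) :
    ∃ z, WayBelow y z ∧ WayBelow z x := by
  -- `G = ⋃_{v ≪ x} ⇓v` is directed and converges to `x`, hence `y ⊑ u ≪ v ≪ x`.
  set G := {u : X | ∃ v, WayBelow u v ∧ WayBelow v x}
  have hGconv : ConvTo G x := by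
    intro U hU hx
    obtain ⟨v, hv, hvU⟩ := hX.convTo_wbSet x U hU hx
    obtain ⟨u, hu, huU⟩ := hX.convTo_wbSet v U hU hvU
    exact ⟨u, ⟨v, hu, hv⟩, huU⟩
  have hGdir : IsDirSub G := by
    refine ⟨(hGconv univ isOpen_univ (mem_univ x)).mono inter_subset_left, ?_⟩
    rintro u₁ ⟨v₁, hu₁, hv₁⟩ u₂ ⟨v₂, hu₂, hv₂⟩
    obtain ⟨v, hv, hv₁v, hv₂v⟩ :=
      (hX.isDirSub_wbSet x).exists_sOrd_of_wayBelow (hX.convTo_wbSet x) hv₁ hv₂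
    obtain ⟨u, hu, hu₁u, hu₂u⟩ := (hX.isDirSub_wbSet v).exists_sOrd_of_wayBelow
      (hX.convTo_wbSet v) (hu₁.trans_sOrd hv₁v) (hu₂.trans_sOrd hv₂v)
    exact ⟨u, ⟨v, hu, hv⟩, hu₁u, hu₂u⟩
  obtain ⟨u, ⟨v, huv, hvx⟩, hyu⟩ := h G hGdir hGconv
  exact ⟨v, hyu.trans_wayBelow huv, hvx⟩

theorem isOpen_setOf_wayBelow (hX : IsContinuousSpace X) (z : X) :
    IsOpen {x : X | WayBelow z x} := by
  refine hX.1.2 _ fun D x hD hconv hzx => ?_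
  obtain ⟨w, hzw, hwx⟩ := hX.exists_wayBelow_wayBelow hzx
  obtain ⟨d, hd, hwd⟩ := hwx D hD hconv
  exact ⟨d, hd, hzw.trans_sOrd hwd⟩

theorem isSupOf_wbSet (hX : IsContinuousSpace X) (x : X) : IsSupOf x (wbSet x) :=
  ⟨fun _ hd => hd.sOrd, fun _ hy => (hX.convTo_wbSet x).sOrd_of_forall_sOrd hy⟩

def wbIdeal (hX : IsContinuousSpace X) (x : X) : TopIdeal X :=
  ⟨wbSet x, hX.isDirSub_wbSet x, fun _ ha _ hz => hz.trans_wayBelow ha, x, hX.isSupOf_wbSet x,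
    hX.convTo_wbSet x⟩

theorem continuous_wbIdeal (hX : IsContinuousSpace X) : Continuous hX.wbIdeal := by
  refine continuous_def.2 fun 𝒰 h𝒰 => isOpen_iff_forall_mem_open.2 fun x hx => ?_
  obtain ⟨z, hzx, hz𝒰⟩ := (TopIdeal.isOpen_iff.1 h𝒰 (hX.wbIdeal x)).1 hx
  exact ⟨_, fun y hzy => (TopIdeal.isOpen_iff.1 h𝒰 (hX.wbIdeal y)).2 ⟨z, hzy, hz𝒰⟩,
    hX.isOpen_setOf_wayBelow z, hzx⟩

end IsContinuousSpace

universe u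

theorem continuous_iff_retract_of_algebraic_general (X : Type u) [TopologicalSpace X] :
    IsContinuousSpace X ↔
      ∃ (Y : Type u) (tY : TopologicalSpace Y) (s : X → Y) (r : Y → X),
        @IsAlgebraicSpace Y tY ∧ @Continuous X Y _ tY s ∧ @Continuous Y X tY _ r ∧
          r ∘ s = id := by
  constructor
  · intro hX
    have : T0Space X := hX.1.1
    exact ⟨TopIdeal X, inferInstance, hX.wbIdeal, TopIdeal.sup, TopIdeal.isAlgebraicSpace,
      hX.continuous_wbIdeal, TopIdeal.continuous_sup,
      funext fun x => TopIdeal.sup_eq_of_isSupOf (hX.isSupOf_wbSet x)⟩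
  · rintro ⟨Y, tY, s, r, hY, hs, hr, hrs⟩
    exact hY.isContinuousSpace.of_retract hs hr (Function.leftInverse_iff_comp.2 hrs)

/-- a T0 space is a continuous space iff it is a continuous retract of
some algebraic space. -/
theorem continuous_iff_retract_of_algebraic (X : Type u) [TopologicalSpace X] [T0Space X] :
    IsContinuousSpace X ↔
      ∃ (Y : Type u) (tY : TopologicalSpace Y) (s : X → Y) (r : Y → X),
        @IsAlgebraicSpace Y tY ∧ @Continuous X Y _ tY s ∧ @Continuous Y X tY _ r ∧
          r ∘ s = id :=
  continuous_iff_retract_of_algebraic_general X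
end
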